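/- Let (G, sI, λ) be a synthesis game for a specification φ ⊆ Σ^ω with parity objective Φ = Parity(p), and let Es ⊆ E2 be a safety assumption that is safe-sufficient for sI and Φ. Then ψ_Es is a sufficient environment assumption for safety(prefixes(φ)), i.e., the language (Σ^ω ∖ ψ_Es) ∪ safety(prefixes(φ)) is Moore realizable. In particular, if φ is a safety language, then ψ_Es is a sufficient environment assumption for φ. -/

import Mathlib

open scoped Classical
noncomputable section

/-! ### Languages of infinite words: prefixes, safety, liveness -/

/-- The finite prefix of length `n` of an infinite word `w`. -/
def wordPrefix {A : Type} (w : ℕ → A) (n : ℕ) : List A := (List.range n).map w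

/-- The set of finite prefixes of words of `L`. -/
def prefixes {A : Type} (L : Set (ℕ → A)) : Set (List A) :=
  {v | ∃ w ∈ L, v = wordPrefix w v.length}

/-- The set of infinite limits of a set of finite words: all infinite words
whose every finite prefix lies in `P`. -/
def safetyCl {A : Type} (P : Set (List A)) : Set (ℕ → A) :=
  {w | ∀ n : ℕ, wordPrefix w n ∈ P}

/-- A language of infinite words is a safety language if it equals the
safety closure of its set of prefixes. -/
def IsSafetyLang {A : Type} (L : Set (ℕ → A)) : Prop := L = safetyCl (prefixes L)

/-- A language of infinite words is a liveness language if every finite word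
is a prefix of some word of the language. -/
def IsLivenessLang {A : Type} (L : Set (ℕ → A)) : Prop := prefixes L = Set.univ

/-! ### Deterministic two-player games on graphs -/

/-- The set of states occurring infinitely often in a play. -/
def infSet {S : Type} (π : ℕ → S) : Set S :=
  {t | ∀ N : ℕ, ∃ k : ℕ, N ≤ k ∧ π k = t}

/-- Parity objective: the minimal priority occurring infinitely often is even. -/
def ParityObj {S : Type} (p : S → ℕ) : Set (ℕ → S) :=
  {π | Even (sInf (p '' infSet π))}

/-- Co-parity objective: the minimal priority occurring infinitely often is odd.
This is the complement of `ParityObj p`. -/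
def CoparityObj {S : Type} (p : S → ℕ) : Set (ℕ → S) :=
  {π | Odd (sInf (p '' infSet π))}

/-- Safety objective: only states of `F` are visited. -/
def SafeObj {S : Type} (F : Set S) : Set (ℕ → S) := {π | ∀ k : ℕ, π k ∈ F}

/-- Reachability objective: some state of `F` is visited. -/
def ReachObj {S : Type} (F : Set S) : Set (ℕ → S) := {π | ∃ k : ℕ, π k ∈ F}

/-- Büchi objective: some state of `F` is visited infinitely often. -/
def BuchiObj {S : Type} (F : Set S) : Set (ℕ → S) := {π | ∃ t ∈ F, t ∈ infSet π}

/-- A deterministic game graph: a finite directed graph in which every state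
has at least one successor, together with the set `S1` of player-1 states
(the remaining states belong to player 2). -/
structure DetGame (S : Type) [Fintype S] where
  E : S → S → Prop
  S1 : Set S
  exists_succ : ∀ s : S, ∃ t : S, E s t

namespace DetGame

variable {S : Type} [Fintype S]

/-- Player-2 states. -/
def S2 (G : DetGame S) : Set S := G.S1ᶜ

/-- A play: an infinite sequence of states following edges. -/
def IsPlay (G : DetGame S) (π : ℕ → S) : Prop := ∀ k : ℕ, G.E (π k) (π (k + 1))

/-- A strategy for player 1: given the history of states strictly before the
current state, and the current state, it chooses a successor, which must be
along an edge whenever the current state is a player-1 state. -/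
structure Strat1 (G : DetGame S) where
  f : List S → S → S
  valid : ∀ (h : List S) (s : S), s ∈ G.S1 → G.E s (f h s)

/-- A strategy for player 2. -/
structure Strat2 (G : DetGame S) where
  f : List S → S → S
  valid : ∀ (h : List S) (s : S), s ∈ G.S2 → G.E s (f h s)

/-- A memoryless strategy depends only on the current state. -/
def Strat1.Memoryless {G : DetGame S} (α : Strat1 G) : Prop :=
  ∀ (h h' : List S) (s : S), α.f h s = α.f h' s

def Strat2.Memoryless {G : DetGame S} (β : Strat2 G) : Prop :=
  ∀ (h h' : List S) (s : S), β.f h s = β.f h' s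

/-- The (history, current state) pair after `k` steps of the play from `s`
where player 1 follows `α` and player 2 follows `β`. -/
def histPair (G : DetGame S) (α : Strat1 G) (β : Strat2 G) (s : S) :
    ℕ → List S × S
  | 0 => ([], s)
  | k + 1 =>
    let p := histPair G α β s k
    (p.1 ++ [p.2], if p.2 ∈ G.S1 then α.f p.1 p.2 else β.f p.1 p.2)

/-- The unique play from `s` when player 1 follows `α` and player 2 follows `β`. -/
def outcome (G : DetGame S) (s : S) (α : Strat1 G) (β : Strat2 G) : ℕ → S :=
  fun k => (histPair G α β s k).2

/-- Sure winning set of player 1 for objective `Φ`. -/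
def Win1 (G : DetGame S) (Φ : Set (ℕ → S)) : Set S :=
  {s | ∃ α : Strat1 G, ∀ β : Strat2 G, G.outcome s α β ∈ Φ}

/-- Sure winning set of player 2 for objective `Φ`. -/
def Win2 (G : DetGame S) (Φ : Set (ℕ → S)) : Set S :=
  {s | ∃ β : Strat2 G, ∀ α : Strat1 G, G.outcome s α β ∈ Φ}

/-- Cooperative winning set: both players together can achieve `Φ`. -/
def Win12 (G : DetGame S) (Φ : Set (ℕ → S)) : Set S :=
  {s | ∃ (α : Strat1 G) (β : Strat2 G), G.outcome s α β ∈ Φ}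

/-- The set of player-2 edges. -/
def E2 (G : DetGame S) : Set (S × S) := {e | G.E e.1 e.2 ∧ e.1 ∈ G.S2}

/-- The objective "either some forbidden edge of `Es` is taken, or the play
remains in the safety component `Safe(Win12(Φ))` of `Φ`". -/
def AssumeSafe (G : DetGame S) (Es : Set (S × S)) (Φ : Set (ℕ → S)) :
    Set (ℕ → S) :=
  {π | (∃ i : ℕ, (π i, π (i + 1)) ∈ Es) ∨ π ∈ SafeObj (G.Win12 Φ)}

/-- A safety assumption `Es` is safe-sufficient for a state `s` and an
objective `Φ` if player 1 wins `AssumeSafe Es Φ` from `s`. -/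
def SafeSufficient (G : DetGame S) (Es : Set (S × S)) (s : S)
    (Φ : Set (ℕ → S)) : Prop :=
  s ∈ G.Win1 (G.AssumeSafe Es Φ)

/-- A safety assumption `Es` is restrictive for `s` and `Φ` if some pair of
strategies produces a play that uses an edge of `Es` and stays in the safety
component of `Φ`. -/
def Restrictive (G : DetGame S) (Es : Set (S × S)) (s : S)
    (Φ : Set (ℕ → S)) : Prop :=
  ∃ (α : Strat1 G) (β : Strat2 G),
    (∃ i : ℕ, (G.outcome s α β i, G.outcome s α β (i + 1)) ∈ Es) ∧
      G.outcome s α β ∈ SafeObj (G.Win12 Φ)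

/-- The objective "either the strong fairness assumption on `El` is violated
(some source state of an edge in `El` repeats forever while the target of
that edge does not), or `Φ` holds". -/
def AssumeFair (G : DetGame S) (El : Set (S × S)) (Φ : Set (ℕ → S)) :
    Set (ℕ → S) :=
  {π | (∃ e ∈ El, e.1 ∈ infSet π ∧ e.2 ∉ infSet π) ∨ π ∈ Φ}

end DetGame

/-! ### Transducers and synthesis games -/

/-- A Moore transducer with input alphabet `Set I` and output alphabet `Set O`. -/
structure Moore (I O : Type) where
  Q : Type
  fin : Finite Q
  qI : Q
  tr : Q → Set I → Q
  out : Q → Set O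

namespace Moore

variable {I O : Type} (T : Moore I O)

/-- The run of the transducer over an infinite input word. -/
def run (w : ℕ → Set I) : ℕ → T.Q
  | 0 => T.qI
  | i + 1 => T.tr (run w i) (w i)

/-- The infinite word over `Set I × Set O` generated by the run on `w`. -/
def output (w : ℕ → Set I) : ℕ → Set I × Set O :=
  fun i => (w i, T.out (T.run w i))

/-- The language of the transducer. -/
def lang : Set (ℕ → Set I × Set O) := {x | ∃ w : ℕ → Set I, x = T.output w}

end Moore

/-- A specification is (Moore) realizable if some Moore transducer
implements it. -/
def MooreRealizable {I O : Type} (L : Set (ℕ → Set I × Set O)) : Prop :=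
  ∃ T : Moore I O, T.lang ⊆ L

/-- `ψ` is a sufficient environment assumption for `φ` if `ψᶜ ∪ φ` is
(Moore) realizable. -/
def SufficientAssumption {I O : Type} (φ ψ : Set (ℕ → Set I × Set O)) : Prop :=
  MooreRealizable (ψᶜ ∪ φ)

/-- A Mealy transducer with input alphabet `Set O` and output alphabet `Set I`
(an environment). -/
structure Mealy (I O : Type) where
  Q : Type
  fin : Finite Q
  qI : Q
  tr : Q → Set O → Q
  out : Q → Set O → Set I

namespace Mealy

variable {I O : Type} (T : Mealy I O)

def run (w : ℕ → Set O) : ℕ → T.Q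
  | 0 => T.qI
  | i + 1 => T.tr (run w i) (w i)

def output (w : ℕ → Set O) : ℕ → Set I × Set O :=
  fun i => (T.out (T.run w i) (w i), w i)

def lang : Set (ℕ → Set I × Set O) := {x | ∃ w : ℕ → Set O, x = T.output w}

end Mealy

/-- `ψ` is realizable for the environment if some Mealy transducer with
input alphabet `Set O` and output alphabet `Set I` implements it. -/
def EnvRealizable {I O : Type} (ψ : Set (ℕ → Set I × Set O)) : Prop :=
  ∃ T : Mealy I O, T.lang ⊆ ψ

/-- A synthesis game: a bipartite deterministic game graph with an initial
player-1 state, whose player-1 states are labeled by input letters and whose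
player-2 states are labeled by output letters, deterministic and complete
with respect to the labels. -/
structure SynthGame (S : Type) [Fintype S] (I O : Type) extends DetGame S where
  sI : S
  sI_mem : sI ∈ S1
  bipartite : ∀ s t : S, E s t → (s ∈ S1 ∧ t ∉ S1) ∨ (s ∉ S1 ∧ t ∈ S1)
  labI : S → Set I
  labO : S → Set O
  labelDet1 : ∀ s t t' : S, s ∈ S1 → E s t → E s t' → labO t = labO t' → t = t'
  labelDet2 : ∀ s t t' : S, s ∉ S1 → E s t → E s t' → labI t = labI t' → t = t'
  complete1 : ∀ s ∈ S1, ∀ o : Set O, ∃ t : S, E s t ∧ labO t = o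
  complete2 : ∀ s ∉ S1, ∀ i : Set I, ∃ t : S, E s t ∧ labI t = i

namespace SynthGame

variable {S I O : Type} [Fintype S] (SG : SynthGame S I O)

/-- The infinite word over `Set I × Set O` corresponding to a play from `sI`. -/
def word (π : ℕ → S) : ℕ → Set I × Set O :=
  fun i => (SG.labI (π (2 * i + 2)), SG.labO (π (2 * i + 1)))

/-- `SG` with priority function `p` is a synthesis game for the specification
`φ`: a play from `sI` satisfies the parity objective iff its word is in `φ`. -/
def IsGameFor (p : S → ℕ) (φ : Set (ℕ → Set I × Set O)) : Prop :=
  ∀ π : ℕ → S, SG.toDetGame.IsPlay π → π 0 = SG.sI →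
    (π ∈ ParityObj p ↔ SG.word π ∈ φ)

/-- The environment assumption defined by a safety assumption `Es`:
words of plays from `sI` never using an edge of `Es`. -/
def psiSafety (Es : Set (S × S)) : Set (ℕ → Set I × Set O) :=
  {w | ∃ π : ℕ → S, SG.toDetGame.IsPlay π ∧ π 0 = SG.sI ∧ SG.word π = w ∧
    ∀ i : ℕ, (π i, π (i + 1)) ∉ Es}

/-- The environment assumption defined by a strongly fair assumption `El`:
words of plays from `sI` in which, for every edge of `El`, either the source
occurs only finitely often or the edge is taken infinitely often. -/
def psiFair (El : Set (S × S)) : Set (ℕ → Set I × Set O) :=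
  {w | ∃ π : ℕ → S, SG.toDetGame.IsPlay π ∧ π 0 = SG.sI ∧ SG.word π = w ∧
    ∀ e ∈ El, e.1 ∉ infSet π ∨
      ∀ N : ℕ, ∃ k : ℕ, N ≤ k ∧ π k = e.1 ∧ π (k + 1) = e.2}

end SynthGame

/-! Let `D` be player 1's winning region for `AssumeSafe Es Φ`. Since `Es` consists of player-2
edges, `D` contains a successor of each of its player-1 states and every non-`Es` successor of
each of its player-2 states. Outside the player-1 attractor of `Es`, player 2 can avoid `Es`
forever, so there `D` lies inside `Win12 Φ`. Hence the memoryless strategy that descends the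
attractor when it can and otherwise stays in `D` keeps every `Es`-free play from `sI` inside
`Win12 Φ`. Run as a Moore transducer on the synthesis game, it answers each word of `ψ_Es` with
the word of such a play (by label-determinism, the word determines the play); every prefix of that
play ends in `Win12 (Parity p)` and so extends to a play whose word lies in `φ`. -/

namespace DetGame

variable {S : Type} [Fintype S] {G : DetGame S}

theorem outcome_isPlay (G : DetGame S) (s : S) (α : Strat1 G) (β : Strat2 G) :
    G.IsPlay (G.outcome s α β) := by
  intro k
  change G.E _ (if _ then _ else _)
  split_ifs with h
  · exact α.valid _ _ h
  · exact β.valid _ _ h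

def Strat1.after (α : Strat1 G) (s : S) : Strat1 G :=
  ⟨fun h => α.f (s :: h), fun h => α.valid (s :: h)⟩

def Strat2.after (β : Strat2 G) (s : S) : Strat2 G :=
  ⟨fun h => β.f (s :: h), fun h => β.valid (s :: h)⟩

theorem histPair_succ_eq_after (α : Strat1 G) (β : Strat2 G) (s : S) (k : ℕ) :
    G.histPair α β s (k + 1) =
      (s :: (G.histPair (α.after s) (β.after s) (G.outcome s α β 1) k).1,
        (G.histPair (α.after s) (β.after s) (G.outcome s α β 1) k).2) := by
  induction k with
  | zero => rfl
  | succ k ih =>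
    rw [histPair, ih]
    rfl

theorem outcome_succ_eq_outcome_after (α : Strat1 G) (β : Strat2 G) (s : S) (k : ℕ) :
    G.outcome s α β (k + 1) = G.outcome (G.outcome s α β 1) (α.after s) (β.after s) k := by
  unfold outcome
  rw [histPair_succ_eq_after]
  rfl

def Strat2.cons (β : Strat2 G) (s t : S) (hst : G.E s t) : Strat2 G where
  f
    | [], x => if x = s then t else β.f [] x
    | _ :: h, x => β.f h x
  valid := by
    rintro (_ | ⟨_, h⟩) x hx
    · dsimp only
      split_ifs with hxs
      · exact hxs ▸ hst
      · exact β.valid _ _ hx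
    · exact β.valid _ _ hx

theorem Strat2.after_cons (β : Strat2 G) (s t : S) (hst : G.E s t) :
    (β.cons s t hst).after s = β :=
  rfl

theorem mem_Win1_of_edge {Φ Ψ : Set (ℕ → S)} {s t : S} {α : Strat1 G}
    (hα : ∀ β, G.outcome s α β ∈ Φ) (hst : G.E s t) (hαt : s ∈ G.S1 → α.f [] s = t)
    (hΦΨ : ∀ π ∈ Φ, π 0 = s → π 1 = t → (fun k => π (k + 1)) ∈ Ψ) :
    t ∈ G.Win1 Ψ := by
  refine ⟨α.after s, fun β => ?_⟩
  have h1 : G.outcome s α (β.cons s t hst) 1 = t := by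
    change (if s ∈ G.S1 then _ else _) = t
    split_ifs with hs
    · exact hαt hs
    · exact if_pos rfl
  have hshift := outcome_succ_eq_outcome_after α (β.cons s t hst) s
  rw [h1] at hshift
  have := hΦΨ _ (hα (β.cons s t hst)) rfl h1
  simpa only [hshift, Strat2.after_cons] using this

def pick (G : DetGame S) (P : S → Prop) (s : S) : S :=
  if h : ∃ t, G.E s t ∧ P t then h.choose else (G.exists_succ s).choose

theorem pick_edge (P : S → Prop) (s : S) : G.E s (G.pick P s) := by
  unfold pick
  split_ifs with h
  · exact h.choose_spec.1
  · exact (G.exists_succ s).choose_spec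

theorem pick_spec {P : S → Prop} {s : S} (h : ∃ t, G.E s t ∧ P t) : P (G.pick P s) := by
  unfold pick
  rw [dif_pos h]
  exact h.choose_spec.2

section Attractor

variable (G) (Es : Set (S × S))

/-- `G.edgeAttr Es n`: the states from which player 1 can force an edge of `Es` to be taken
within `n` steps. -/
def edgeAttr : ℕ → Set S
  | 0 => ∅
  | n + 1 => {s | (s ∈ G.S1 ∧ ∃ t, G.E s t ∧ t ∈ edgeAttr n) ∨
      (s ∉ G.S1 ∧ ∀ t, G.E s t → (s, t) ∈ Es ∨ t ∈ edgeAttr n)}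

def edgeAttractor : Set S := ⋃ n, G.edgeAttr Es n

def avoidStrat : Strat2 G :=
  ⟨fun _ s => G.pick (fun t => (s, t) ∉ Es ∧ t ∉ G.edgeAttractor Es) s,
    fun _ s _ => G.pick_edge _ s⟩

variable {G Es}

theorem edgeAttr_mono : Monotone (G.edgeAttr Es) := by
  refine monotone_nat_of_le_succ fun n => ?_
  induction n with
  | zero => exact Set.empty_subset _
  | succ n ih =>
    rintro s (⟨hs, t, hst, ht⟩ | ⟨hs, h⟩)
    · exact Or.inl ⟨hs, t, hst, ih ht⟩
    · exact Or.inr ⟨hs, fun t hst => (h t hst).imp_right (@ih t)⟩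

theorem exists_edge_notMem_edgeAttractor {s : S} (hs : s ∉ G.edgeAttractor Es)
    (hs2 : s ∉ G.S1) : ∃ t, G.E s t ∧ (s, t) ∉ Es ∧ t ∉ G.edgeAttractor Es := by
  by_contra! hcon
  have hlev : ∀ t, ∃ n, G.E s t → (s, t) ∉ Es → t ∈ G.edgeAttr Es n := fun t => by
    by_cases h : G.E s t ∧ (s, t) ∉ Es
    · obtain ⟨n, hn⟩ := Set.mem_iUnion.1 (hcon t h.1 h.2)
      exact ⟨n, fun _ _ => hn⟩
    · exact ⟨0, fun hst hEs => absurd ⟨hst, hEs⟩ h⟩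
  choose lev hlev using hlev
  obtain ⟨N, hN⟩ := Finite.exists_le lev
  refine hs (Set.mem_iUnion.2 ⟨N + 1, Or.inr ⟨hs2, fun t hst => ?_⟩⟩)
  by_cases hEs : (s, t) ∈ Es
  · exact Or.inl hEs
  · exact Or.inr (edgeAttr_mono (hN t) (hlev t hst hEs))

theorem notMem_edgeAttr {π : ℕ → S} (hπ : G.IsPlay π) (hfree : ∀ k, (π k, π (k + 1)) ∉ Es)
    (hdown : ∀ k n, π k ∈ G.S1 → π k ∈ G.edgeAttr Es (n + 1) → π (k + 1) ∈ G.edgeAttr Es n) :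
    ∀ n k, π k ∉ G.edgeAttr Es n := by
  intro n
  induction n with
  | zero => exact fun _ h => h
  | succ n ih =>
    intro k hk
    by_cases hs : π k ∈ G.S1
    · exact ih (k + 1) (hdown k n hs hk)
    · rcases hk with ⟨hs', -⟩ | ⟨-, h⟩
      · exact hs hs'
      · exact (h _ (hπ k)).elim (hfree k) (ih (k + 1))

theorem avoidStrat_step (hEs : Es ⊆ G.E2) {x y : S} (hx : x ∉ G.edgeAttractor Es)
    (hxy : G.E x y) (hy : x ∉ G.S1 → y = (G.avoidStrat Es).f [] x) :
    (x, y) ∉ Es ∧ y ∉ G.edgeAttractor Es := by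
  by_cases hx1 : x ∈ G.S1
  · refine ⟨fun h => (hEs h).2 hx1, fun hy' => hx ?_⟩
    obtain ⟨n, hn⟩ := Set.mem_iUnion.1 hy'
    exact Set.mem_iUnion.2 ⟨n + 1, Or.inl ⟨hx1, y, hxy, hn⟩⟩
  · rw [hy hx1]
    exact pick_spec (exists_edge_notMem_edgeAttractor hx hx1)

theorem outcome_avoidStrat (hEs : Es ⊆ G.E2) {s : S} (hs : s ∉ G.edgeAttractor Es)
    (α : Strat1 G) (k : ℕ) :
    G.outcome s α (G.avoidStrat Es) k ∉ G.edgeAttractor Es ∧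
      (G.outcome s α (G.avoidStrat Es) k, G.outcome s α (G.avoidStrat Es) (k + 1)) ∉ Es := by
  set π := G.outcome s α (G.avoidStrat Es)
  have step : ∀ k, π k ∉ G.edgeAttractor Es →
      (π k, π (k + 1)) ∉ Es ∧ π (k + 1) ∉ G.edgeAttractor Es :=
    fun k hk => avoidStrat_step hEs hk (outcome_isPlay G s α _ k) (fun h => if_neg h)
  have hR : ∀ k, π k ∉ G.edgeAttractor Es := fun k => Nat.rec hs (fun k ih => (step k ih).2) k
  exact ⟨hR k, (step k (hR k)).1⟩

end Attractor

section Winning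

variable {Es : Set (S × S)} {Φ : Set (ℕ → S)}

theorem tail_mem_assumeSafe {π : ℕ → S} (hπ : π ∈ G.AssumeSafe Es Φ) (h01 : (π 0, π 1) ∉ Es) :
    (fun k => π (k + 1)) ∈ G.AssumeSafe Es Φ := by
  rcases hπ with ⟨_ | i, hi⟩ | hsafe
  · exact absurd hi h01
  · exact Or.inl ⟨i, hi⟩
  · exact Or.inr fun k => hsafe (k + 1)

theorem mem_Win1_assumeSafe_of_edge {s t : S} {α : Strat1 G}
    (hα : ∀ β, G.outcome s α β ∈ G.AssumeSafe Es Φ) (hst : G.E s t)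
    (hαt : s ∈ G.S1 → α.f [] s = t) (hEs : (s, t) ∉ Es) :
    t ∈ G.Win1 (G.AssumeSafe Es Φ) :=
  mem_Win1_of_edge hα hst hαt fun _ hπ h0 h1 => tail_mem_assumeSafe hπ (h0 ▸ h1 ▸ hEs)

theorem exists_succ_mem_Win1_assumeSafe (hEs : Es ⊆ G.E2) {s : S}
    (hs : s ∈ G.Win1 (G.AssumeSafe Es Φ)) (hs1 : s ∈ G.S1) :
    ∃ t, G.E s t ∧ t ∈ G.Win1 (G.AssumeSafe Es Φ) := by
  obtain ⟨α, hα⟩ := hs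
  exact ⟨α.f [] s, α.valid _ _ hs1,
    mem_Win1_assumeSafe_of_edge hα (α.valid _ _ hs1) (fun _ => rfl) fun h => (hEs h).2 hs1⟩

theorem mem_Win1_assumeSafe_of_notMem_S1 {s t : S} (hs : s ∈ G.Win1 (G.AssumeSafe Es Φ))
    (hs1 : s ∉ G.S1) (hst : G.E s t) (hEs : (s, t) ∉ Es) :
    t ∈ G.Win1 (G.AssumeSafe Es Φ) := by
  obtain ⟨α, hα⟩ := hs
  exact mem_Win1_assumeSafe_of_edge hα hst (absurd · hs1) hEs

theorem mem_Win12_of_mem_Win1_assumeSafe (hEs : Es ⊆ G.E2) {s : S}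
    (hs : s ∈ G.Win1 (G.AssumeSafe Es Φ)) (hR : s ∉ G.edgeAttractor Es) : s ∈ G.Win12 Φ := by
  obtain ⟨α, hα⟩ := hs
  rcases hα (G.avoidStrat Es) with ⟨i, hi⟩ | hsafe
  · exact absurd hi (outcome_avoidStrat hEs hR α i).2
  · exact hsafe 0

variable (G Es) in
def attractOrStay (D : Set S) (s : S) : S :=
  if ∃ t, G.E s t ∧ t ∈ G.edgeAttractor Es then
    G.pick (· ∈ G.edgeAttr Es (sInf {n | ∃ t, G.E s t ∧ t ∈ G.edgeAttr Es n})) s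
  else G.pick (· ∈ D) s

theorem attractOrStay_edge (D : Set S) (s : S) : G.E s (G.attractOrStay Es D s) := by
  unfold attractOrStay
  split_ifs
  exacts [pick_edge _ s, pick_edge _ s]

theorem attractOrStay_mem_edgeAttr {D : Set S} {s : S} {n : ℕ} (hs1 : s ∈ G.S1)
    (hs : s ∈ G.edgeAttr Es (n + 1)) : G.attractOrStay Es D s ∈ G.edgeAttr Es n := by
  have hn : n ∈ {m | ∃ t, G.E s t ∧ t ∈ G.edgeAttr Es m} := by
    rcases hs with ⟨-, h⟩ | ⟨hs1', -⟩
    exacts [h, absurd hs1 hs1']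
  obtain ⟨t, hst, ht⟩ := id hn
  unfold attractOrStay
  rw [if_pos ⟨t, hst, Set.mem_iUnion.2 ⟨n, ht⟩⟩]
  exact edgeAttr_mono (Nat.sInf_le hn) (pick_spec (Nat.sInf_mem ⟨n, hn⟩))

theorem attractOrStay_mem {D : Set S} {s : S} (hs1 : s ∈ G.S1) (hR : s ∉ G.edgeAttractor Es)
    (hD : ∃ t, G.E s t ∧ t ∈ D) : G.attractOrStay Es D s ∈ D := by
  have hno : ¬∃ t, G.E s t ∧ t ∈ G.edgeAttractor Es := by
    rintro ⟨t, hst, ht⟩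
    obtain ⟨n, hn⟩ := Set.mem_iUnion.1 ht
    exact hR (Set.mem_iUnion.2 ⟨n + 1, Or.inl ⟨hs1, t, hst, hn⟩⟩)
  unfold attractOrStay
  rw [if_neg hno]
  exact pick_spec hD

theorem mem_Win12_of_consistent (hEs : Es ⊆ G.E2) {π : ℕ → S} (hπ : G.IsPlay π)
    (h0 : π 0 ∈ G.Win1 (G.AssumeSafe Es Φ))
    (hσ : ∀ k, π k ∈ G.S1 →
      π (k + 1) = G.attractOrStay Es (G.Win1 (G.AssumeSafe Es Φ)) (π k))
    (hfree : ∀ k, (π k, π (k + 1)) ∉ Es) (k : ℕ) : π k ∈ G.Win12 Φ := by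
  have hR : ∀ k, π k ∉ G.edgeAttractor Es := fun k hk => by
    obtain ⟨n, hn⟩ := Set.mem_iUnion.1 hk
    refine notMem_edgeAttr hπ hfree (fun k n hk1 hkn => ?_) n k hn
    exact hσ k hk1 ▸ attractOrStay_mem_edgeAttr hk1 hkn
  have hD : ∀ k, π k ∈ G.Win1 (G.AssumeSafe Es Φ) := by
    intro k
    induction k with
    | zero => exact h0
    | succ k ih =>
      by_cases hk1 : π k ∈ G.S1
      · rw [hσ k hk1]
        exact attractOrStay_mem hk1 (hR k) (exists_succ_mem_Win1_assumeSafe hEs ih hk1)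
      · exact mem_Win1_assumeSafe_of_notMem_S1 ih hk1 (hπ k) (hfree k)
  exact mem_Win12_of_mem_Win1_assumeSafe hEs (hD k) (hR k)

end Winning

end DetGame

section Words

variable {A : Type}

theorem infSet_eq_of_shift {π π' : ℕ → A} (m : ℕ) (h : ∀ k, π (k + m) = π' k) :
    infSet π = infSet π' := by
  ext t
  constructor
  · intro ht N
    obtain ⟨k, hk, hkt⟩ := ht (N + m)
    refine ⟨k - m, by omega, ?_⟩
    rw [← h, Nat.sub_add_cancel (by omega)]
    exact hkt
  · intro ht N
    obtain ⟨k, hk, hkt⟩ := ht N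
    exact ⟨k + m, by omega, (h k).trans hkt⟩

def splice (π π' : ℕ → A) (m : ℕ) : ℕ → A := fun k => if k < m then π k else π' (k - m)

theorem splice_add (π π' : ℕ → A) (m k : ℕ) : splice π π' m (k + m) = π' k := by
  simp [splice]

theorem splice_of_le {π π' : ℕ → A} {m k : ℕ} (h : π' 0 = π m) (hk : k ≤ m) :
    splice π π' m k = π k := by
  unfold splice
  split_ifs with hkm
  · rfl
  · rw [show k = m by omega, Nat.sub_self, h]

theorem wordPrefix_congr {w w' : ℕ → A} {n : ℕ} (h : ∀ i < n, w i = w' i) :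
    wordPrefix w n = wordPrefix w' n :=
  List.map_congr_left fun i hi => h i (List.mem_range.1 hi)

theorem wordPrefix_mem_prefixes {L : Set (ℕ → A)} {w : ℕ → A} (hw : w ∈ L) (n : ℕ) :
    wordPrefix w n ∈ prefixes L :=
  ⟨w, hw, by simp [wordPrefix]⟩

end Words

theorem DetGame.IsPlay.splice {S : Type} [Fintype S] {G : DetGame S} {π π' : ℕ → S}
    (hπ : G.IsPlay π) (hπ' : G.IsPlay π') {m : ℕ} (h : π' 0 = π m) :
    G.IsPlay (splice π π' m) := by
  intro k
  by_cases hk : k + 1 ≤ m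
  · rw [splice_of_le h hk, splice_of_le h (by omega)]
    exact hπ k
  · obtain ⟨j, rfl⟩ : ∃ j, k = j + m := ⟨k - m, by omega⟩
    rw [splice_add, show j + m + 1 = j + 1 + m by omega, splice_add]
    exact hπ' j

namespace SynthGame

variable {S I O : Type} [Fintype S] {SG : SynthGame S I O}

theorem mem_S1_two_mul {π : ℕ → S} (hπ : SG.IsPlay π) (h0 : π 0 = SG.sI) (n : ℕ) :
    π (2 * n) ∈ SG.S1 ∧ π (2 * n + 1) ∉ SG.S1 := by
  have hodd : ∀ k, π k ∈ SG.S1 → π (k + 1) ∉ SG.S1 := fun k hk =>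
    (SG.bipartite _ _ (hπ k)).elim And.right fun h => absurd hk h.1
  have heven : ∀ k, π k ∉ SG.S1 → π (k + 1) ∈ SG.S1 := fun k hk =>
    (SG.bipartite _ _ (hπ k)).elim (fun h => absurd h.1 hk) And.right
  induction n with
  | zero => exact ⟨h0 ▸ SG.sI_mem, hodd 0 (h0 ▸ SG.sI_mem)⟩
  | succ n ih =>
    have h := heven _ ih.2
    exact ⟨h, hodd _ h⟩

variable (SG) in
def succI (s : S) (i : Set I) : S :=
  if h : ∃ t, SG.E s t ∧ SG.labI t = i then h.choose else s

theorem succI_spec {s : S} {i : Set I} (h : ∃ t, SG.E s t ∧ SG.labI t = i) :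
    SG.E s (SG.succI s i) ∧ SG.labI (SG.succI s i) = i := by
  unfold succI
  rw [dif_pos h]
  exact h.choose_spec

variable (SG) in
def moore (σ : S → S) : Moore I O where
  Q := S
  fin := inferInstance
  qI := SG.sI
  tr q i := SG.succI (σ q) i
  out q := SG.labO (σ q)

theorem eq_run_of_word_eq_output {σ : S → S} (hσ : ∀ s, SG.E s (σ s)) {π : ℕ → S}
    (hπ : SG.IsPlay π) (h0 : π 0 = SG.sI) {w : ℕ → Set I}
    (hw : SG.word π = (SG.moore σ).output w) (n : ℕ) :
    π (2 * n) = (SG.moore σ).run w n ∧ π (2 * n + 1) = σ (π (2 * n)) := by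
  have hS := mem_S1_two_mul hπ h0
  have hodd : ∀ n, π (2 * n) = (SG.moore σ).run w n → π (2 * n + 1) = σ (π (2 * n)) :=
    fun n hn => SG.labelDet1 _ _ _ (hS n).1 (hπ _) (hσ _) (by
      rw [hn]
      exact congrArg Prod.snd (congrFun hw n))
  have heven : π (2 * n) = (SG.moore σ).run w n := by
    induction n with
    | zero => exact h0
    | succ n ih =>
      have hlab : SG.labI (π (2 * n + 1 + 1)) = w n := congrArg Prod.fst (congrFun hw n)
      have hedge : SG.E (σ (π (2 * n))) (π (2 * n + 1 + 1)) := hodd n ih ▸ hπ (2 * n + 1)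
      obtain ⟨hE, hlab'⟩ := succI_spec ⟨_, hedge, hlab⟩
      have hnot : σ (π (2 * n)) ∉ SG.S1 := hodd n ih ▸ (hS n).2
      change π (2 * n + 1 + 1) = SG.succI (σ ((SG.moore σ).run w n)) (w n)
      rw [← ih]
      exact SG.labelDet2 _ _ _ hnot hedge hE (hlab.trans hlab'.symm)
  exact ⟨heven, hodd n heven⟩

theorem consistent_of_word_eq_output {σ : S → S} (hσ : ∀ s, SG.E s (σ s)) {π : ℕ → S}
    (hπ : SG.IsPlay π) (h0 : π 0 = SG.sI) {w : ℕ → Set I}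
    (hw : SG.word π = (SG.moore σ).output w) (k : ℕ) (hk : π k ∈ SG.S1) :
    π (k + 1) = σ (π k) := by
  obtain ⟨n, rfl | rfl⟩ := Nat.even_or_odd' k
  · exact (eq_run_of_word_eq_output hσ hπ h0 hw n).2
  · exact absurd hk (mem_S1_two_mul hπ h0 n).2

theorem IsGameFor.wordPrefix_mem_prefixes_of_mem_Win12 {p : S → ℕ}
    {φ : Set (ℕ → Set I × Set O)} (hfor : SG.IsGameFor p φ) {π : ℕ → S} (hπ : SG.IsPlay π)
    (h0 : π 0 = SG.sI) {n : ℕ} (hW : π (2 * n) ∈ SG.Win12 (ParityObj p)) :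
    wordPrefix (SG.word π) n ∈ prefixes φ := by
  obtain ⟨α, β, hpar⟩ := hW
  set π' := splice π (SG.outcome (π (2 * n)) α β) (2 * n)
  have hplay : SG.IsPlay π' := hπ.splice (SG.outcome_isPlay _ α β) rfl
  have hpar' : π' ∈ ParityObj p := by
    change Even (sInf (p '' infSet π'))
    rwa [infSet_eq_of_shift (2 * n) (splice_add _ _ _)]
  have hpre : ∀ k ≤ 2 * n, π' k = π k := fun k hk => splice_of_le rfl hk
  have hφ := (hfor π' hplay ((hpre 0 (Nat.zero_le _)).trans h0)).1 hpar'
  rw [wordPrefix_congr (w' := SG.word π') fun i hi => ?_]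
  · exact wordPrefix_mem_prefixes hφ n
  · simp only [word, hpre (2 * i + 2) (by omega), hpre (2 * i + 1) (by omega)]

end SynthGame

theorem safety_assumption_sufficient_general {S I O : Type} [Fintype S] (SG : SynthGame S I O)
    (p : S → ℕ) (φ : Set (ℕ → Set I × Set O)) (hfor : SG.IsGameFor p φ)
    (Es : Set (S × S)) (hEs : Es ⊆ SG.toDetGame.E2)
    (hsuff : SG.toDetGame.SafeSufficient Es SG.sI (ParityObj p)) :
    SufficientAssumption (safetyCl (prefixes φ)) (SG.psiSafety Es) ∧
    (IsSafetyLang φ → SufficientAssumption φ (SG.psiSafety Es)) := by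
  set σ := SG.attractOrStay Es (SG.Win1 (SG.AssumeSafe Es (ParityObj p)))
  have hσ : ∀ s, SG.E s (σ s) := DetGame.attractOrStay_edge _
  have hT : (SG.moore σ).lang ⊆ (SG.psiSafety Es)ᶜ ∪ safetyCl (prefixes φ) := by
    rintro _ ⟨w, rfl⟩
    refine or_iff_not_imp_left.2 fun hψ n => ?_
    obtain ⟨π, hπ, h0, hw, hfree⟩ := not_not.1 hψ
    have hcons := SynthGame.consistent_of_word_eq_output hσ hπ h0 hw
    have hW := DetGame.mem_Win12_of_consistent hEs hπ (h0 ▸ hsuff) hcons hfree (2 * n)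
    exact hw ▸ hfor.wordPrefix_mem_prefixes_of_mem_Win12 hπ h0 hW
  refine ⟨⟨_, hT⟩, fun hsafe => ⟨SG.moore σ, ?_⟩⟩
  rw [hsafe]
  exact hT

theorem safety_assumption_sufficient {S I O : Type} [Fintype S] [Fintype I]
    [Fintype O] (SG : SynthGame S I O) (p : S → ℕ)
    (φ : Set (ℕ → Set I × Set O)) (hfor : SG.IsGameFor p φ)
    (Es : Set (S × S)) (hEs : Es ⊆ SG.toDetGame.E2)
    (hsuff : SG.toDetGame.SafeSufficient Es SG.sI (ParityObj p)) :
    SufficientAssumption (safetyCl (prefixes φ)) (SG.psiSafety Es) ∧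
    (IsSafetyLang φ → SufficientAssumption φ (SG.psiSafety Es)) :=
  safety_assumption_sufficient_general SG p φ hfor Es hEs hsuff
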